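/- Let 1 ≤ k ≤ n and m ≥ 0 be integers, let α_1, …, α_m ∈ (ℤ/2)^k be sign patterns, and let M be the space of all k-tuples (x_1, …, x_k) of pairwise orthogonal unit vectors in ℝ^n such that, for each j ∈ {1, …, k}, the last k - j coordinates of x_j are zero. Let f : M → ℝ^m be a continuous map such that for every j ∈ {1, …, k} and i ∈ {1, …, m}, replacing x_j by -x_j multiplies the i-th coordinate f_i(x_1, …, x_k) by (-1)^{⟨α_i, ε_j⟩}. Then there exists a continuous map F : V_{n,k} → ℝ^m with the same equivariance property whose restriction to M equals f. -/

import Mathlib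

/-- The Stiefel manifold predicate: `x` is a `k`-tuple of pairwise orthogonal
unit vectors in `ℝⁿ`. -/
def IsStiefelFrame (n k : ℕ) (x : Fin k → EuclideanSpace ℝ (Fin n)) : Prop :=
  (∀ j, ‖x j‖ = 1) ∧ ∀ i j, i ≠ j → inner ℝ (x i) (x j) = (0 : ℝ)

/-- The submanifold `M ⊆ V_{n,k}`: additionally, for each `j` (0-indexed) the
last `k - (j+1)` coordinates of `x j` vanish. -/
def IsFlagFrame (n k : ℕ) (x : Fin k → EuclideanSpace ℝ (Fin n)) : Prop :=
  IsStiefelFrame n k x ∧ ∀ (j : Fin k) (i : Fin n), n - k + j.1 + 1 ≤ i.1 → x j i = 0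

/-- Negating the `j`-th vector of the tuple `x`. -/
def negAt {n k : ℕ} (j : Fin k) (x : Fin k → EuclideanSpace ℝ (Fin n)) :
    Fin k → EuclideanSpace ℝ (Fin n) :=
  Function.update x j (-(x j))

/-!
Extend `f` by Tietze to a continuous map `F₀` on all of `(ℝⁿ)ᵏ`, ignoring the symmetry, and then
average over the sign group `{±1}ᵏ`, twisting by the characters `χᵢ(s) = ∏ⱼ sⱼ ^ αᵢⱼ`:
`F x = 2⁻ᵏ ∑ₛ ρ(s)⁻¹ F₀(s • x)`. The average is equivariant by reindexing the sum, and on the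
closed invariant set `M` every summand equals `f x` because `f` is already equivariant there.
-/

universe v w

section EquivariantAverage

variable {G : Type*} {X : Type v} {E : Type w} [Group G] [Fintype G] [MulAction G X]
  [AddCommGroup E] [Module ℝ E] [TopologicalSpace E]

noncomputable def equivariantAverage (ρ : G →* E →L[ℝ] E) (F : X → E) (x : X) : E :=
  (Fintype.card G : ℝ)⁻¹ • ∑ g : G, ρ g⁻¹ (F (g • x))

theorem continuous_equivariantAverage [TopologicalSpace X] [ContinuousConstSMul G X]
    [ContinuousAdd E] [ContinuousConstSMul ℝ E] (ρ : G →* E →L[ℝ] E) {F : X → E}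
    (hF : Continuous F) : Continuous (equivariantAverage ρ F) := by
  unfold equivariantAverage
  fun_prop

theorem equivariantAverage_smul (ρ : G →* E →L[ℝ] E) (F : X → E) (h : G) (x : X) :
    equivariantAverage ρ F (h • x) = ρ h (equivariantAverage ρ F x) := by
  have hsum : ∑ g : G, ρ g⁻¹ (F (g • h • x)) = ρ h (∑ g : G, ρ g⁻¹ (F (g • x))) := by
    rw [map_sum]
    refine Fintype.sum_equiv (Equiv.mulRight h) _ _ fun g => ?_
    rw [Equiv.coe_mulRight, mul_smul, ← mul_apply_eq_comp, ← map_mul,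
      mul_inv_rev, mul_inv_cancel_left]
  simp only [equivariantAverage, hsum, map_smul]

theorem equivariantAverage_eq_self {ρ : G →* E →L[ℝ] E} {F : X → E} {x : X}
    (hF : ∀ g : G, F (g • x) = ρ g (F x)) : equivariantAverage ρ F x = F x := by
  have hterm : ∀ g : G, ρ g⁻¹ (F (g • x)) = F x := fun g => by
    rw [hF, ← mul_apply_eq_comp, ← map_mul, inv_mul_cancel, map_one,
      one_apply_eq_self]
  rw [equivariantAverage, Finset.sum_congr rfl fun g _ => hterm g, Finset.sum_const,
    Finset.card_univ, ← Nat.cast_smul_eq_nsmul ℝ, inv_smul_smul₀ (by positivity)]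

theorem exists_equivariant_extension [TopologicalSpace X] [NormalSpace X]
    [ContinuousConstSMul G X] [ContinuousAdd E] [ContinuousConstSMul ℝ E]
    [TietzeExtension.{v, w} E]
    (ρ : G →* E →L[ℝ] E) {S : Set X} (hS : IsClosed S) (hSG : ∀ g : G, ∀ x ∈ S, g • x ∈ S)
    (f : C(S, E)) (hf : ∀ (g : G) (x : S), f ⟨g • x, hSG g x x.2⟩ = ρ g (f x)) :
    ∃ F : C(X, E), (∀ (g : G) (x : X), F (g • x) = ρ g (F x)) ∧ ∀ x : S, F x = f x := by
  obtain ⟨F₀, hF₀⟩ := f.exists_restrict_eq hS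
  have hF₀f : ∀ x : S, F₀ x = f x := fun x => congr($hF₀ x)
  have hF₀G : ∀ (x : S) (g : G), F₀ (g • (x : X)) = ρ g (F₀ x) := fun x g => by
    rw [hF₀f x, ← hf, ← hF₀f]
  refine ⟨⟨equivariantAverage ρ F₀, continuous_equivariantAverage ρ F₀.continuous⟩,
    equivariantAverage_smul ρ F₀, fun x => ?_⟩
  rw [ContinuousMap.coe_mk, equivariantAverage_eq_self (hF₀G x), hF₀f]

end EquivariantAverage

theorem Pi.units_int_induction {ι : Type*} [Fintype ι] [DecidableEq ι]
    {p : (ι → ℤˣ) → Prop} (one : p 1) (mul : ∀ s t, p s → p t → p (s * t))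
    (mulSingle_neg_one : ∀ i, p (Pi.mulSingle i (-1) : ι → ℤˣ)) (s : ι → ℤˣ) : p s := by
  rw [← Finset.univ_prod_mulSingle s]
  refine Finset.prod_induction _ p mul one fun i _ => ?_
  rcases Int.units_eq_one_or (s i) with h | h <;> rw [h]
  · rwa [Pi.mulSingle_one]
  · exact mulSingle_neg_one i

section SignAction

variable {n k m : ℕ}

theorem negAt_eq_mulSingle_smul (j : Fin k) (x : Fin k → EuclideanSpace ℝ (Fin n)) :
    negAt j x = (Pi.mulSingle j (-1) : Fin k → ℤˣ) • x := by
  funext i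
  by_cases h : i = j <;> simp [negAt, h]

theorem IsFlagFrame.units_smul {x : Fin k → EuclideanSpace ℝ (Fin n)} (hx : IsFlagFrame n k x)
    (s : Fin k → ℤˣ) : IsFlagFrame n k (s • x) := by
  have hsmul : ∀ j, (s • x) j = ((s j : ℤ) : ℝ) • x j := fun j => by
    rw [Pi.smul_apply', Units.smul_def, Int.cast_smul_eq_zsmul]
  have habs : ∀ j, |((s j : ℤ) : ℝ)| = 1 := fun j => by
    rcases Int.units_eq_one_or (s j) with h | h <;> simp [h]
  obtain ⟨⟨hnorm, horth⟩, hzero⟩ := hx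
  refine ⟨⟨fun j => ?_, fun i j hij => ?_⟩, fun j i hi => ?_⟩
  · rw [hsmul, norm_smul, hnorm, mul_one, Real.norm_eq_abs, habs]
  · rw [hsmul, hsmul, real_inner_smul_left, real_inner_smul_right, horth i j hij, mul_zero,
      mul_zero]
  · rw [hsmul, PiLp.smul_apply, hzero j i hi, smul_zero]

theorem isClosed_setOf_isFlagFrame (n k : ℕ) : IsClosed {x | IsFlagFrame n k x} := by
  simp only [IsFlagFrame, IsStiefelFrame, Set.ofPred_and, Set.ofPred_forall]
  refine .inter (.inter (isClosed_iInter fun j => isClosed_eq (by fun_prop) (by fun_prop))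
    (isClosed_iInter fun i => isClosed_iInter fun j => isClosed_iInter fun _ =>
      isClosed_eq (by fun_prop) (by fun_prop)))
    (isClosed_iInter fun j => isClosed_iInter fun i => isClosed_iInter fun _ =>
      isClosed_eq (by fun_prop) (by fun_prop))

noncomputable def signCharacter (a : Fin k → ZMod 2) : (Fin k → ℤˣ) →* ℝ where
  toFun s := ∏ j, ((s j : ℤ) : ℝ) ^ (a j).val
  map_one' := by simp
  map_mul' s t := by simp [mul_pow, Finset.prod_mul_distrib]

theorem signCharacter_mulSingle_neg_one (a : Fin k → ZMod 2) (j : Fin k) :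
    signCharacter a (Pi.mulSingle j (-1) : Fin k → ℤˣ) = (-1) ^ (a j).val := by
  simp [signCharacter, Pi.mulSingle_apply, apply_ite, ite_pow]

noncomputable def signRepresentation (α : Fin m → Fin k → ZMod 2) :
    (Fin k → ℤˣ) →* EuclideanSpace ℝ (Fin m) →L[ℝ] EuclideanSpace ℝ (Fin m) :=
  ((Matrix.toEuclideanCLM : Matrix (Fin m) (Fin m) ℝ ≃⋆ₐ[ℝ] _) : Matrix (Fin m) (Fin m) ℝ →* _).comp
    (((Matrix.diagonalRingHom (Fin m) ℝ) : (Fin m → ℝ) →* _).comp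
      (MonoidHom.pi fun i => signCharacter (α i)))

theorem signRepresentation_apply (α : Fin m → Fin k → ZMod 2) (s : Fin k → ℤˣ)
    (v : EuclideanSpace ℝ (Fin m)) (i : Fin m) :
    signRepresentation α s v i = signCharacter (α i) s * v i := by
  simp [signRepresentation, Matrix.ofLp_toEuclideanCLM, Matrix.mulVec_diagonal]

theorem map_units_smul_of_map_negAt (α : Fin m → Fin k → ZMod 2)
    {f : {x : Fin k → EuclideanSpace ℝ (Fin n) // IsFlagFrame n k x} →
      EuclideanSpace ℝ (Fin m)}
    (hequiv : ∀ (x : {x : Fin k → EuclideanSpace ℝ (Fin n) // IsFlagFrame n k x})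
      (j : Fin k) (hx : IsFlagFrame n k (negAt j x.1)) (i : Fin m),
      f ⟨negAt j x.1, hx⟩ i = (-1 : ℝ) ^ (α i j).val * f x i)
    (s : Fin k → ℤˣ) (x : {x : Fin k → EuclideanSpace ℝ (Fin n) // IsFlagFrame n k x}) :
    f ⟨s • x.1, x.2.units_smul s⟩ = signRepresentation α s (f x) := by
  induction s using Pi.units_int_induction generalizing x with
  | one => simp
  | mul s t hs ht =>
    simp only [mul_smul, map_mul, mul_apply_eq_comp, ← ht]
    exact hs ⟨t • x.1, x.2.units_smul t⟩
  | mulSingle_neg_one j =>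
    ext i
    rw [signRepresentation_apply, signCharacter_mulSingle_neg_one,
      ← hequiv x j (negAt_eq_mulSingle_smul j x.1 ▸ x.2.units_smul _)]
    simp only [negAt_eq_mulSingle_smul]

end SignAction

theorem stmt_13_general (n k m : ℕ)
    (α : Fin m → Fin k → ZMod 2)
    (f : {x : Fin k → EuclideanSpace ℝ (Fin n) // IsFlagFrame n k x} →
      EuclideanSpace ℝ (Fin m))
    (hf : Continuous f)
    (hequiv : ∀ (x : {x : Fin k → EuclideanSpace ℝ (Fin n) // IsFlagFrame n k x})
      (j : Fin k) (hx : IsFlagFrame n k (negAt j x.1)) (i : Fin m),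
      f ⟨negAt j x.1, hx⟩ i = (-1 : ℝ) ^ (α i j).val * f x i) :
    ∃ F : {x : Fin k → EuclideanSpace ℝ (Fin n) // IsStiefelFrame n k x} →
        EuclideanSpace ℝ (Fin m),
      Continuous F ∧
      (∀ (x : {x : Fin k → EuclideanSpace ℝ (Fin n) // IsStiefelFrame n k x})
        (j : Fin k) (hx : IsStiefelFrame n k (negAt j x.1)) (i : Fin m),
        F ⟨negAt j x.1, hx⟩ i = (-1 : ℝ) ^ (α i j).val * F x i) ∧
      ∀ (x : Fin k → EuclideanSpace ℝ (Fin n)) (hV : IsStiefelFrame n k x)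
        (hM : IsFlagFrame n k x), F ⟨x, hV⟩ = f ⟨x, hM⟩ := by
  obtain ⟨F, hF_equiv, hF_ext⟩ := exists_equivariant_extension (signRepresentation α)
    (isClosed_setOf_isFlagFrame n k) (fun s _ hx => hx.units_smul s) ⟨f, hf⟩
    (map_units_smul_of_map_negAt α hequiv)
  refine ⟨fun x => F x.1, by fun_prop, fun x j _ i => ?_, fun x _ hM => hF_ext ⟨x, hM⟩⟩
  change F (negAt j x.1) i = _
  rw [negAt_eq_mulSingle_smul, hF_equiv, signRepresentation_apply,
    signCharacter_mulSingle_neg_one]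

/-- Every continuous map `f : M → ℝ^m` that is `(ℤ/2)^k`-equivariant with
respect to sign patterns `α_1, …, α_m` extends to a continuous equivariant map
`F : V_{n,k} → ℝ^m`. -/
theorem stmt_13 (n k m : ℕ) (hk : 1 ≤ k) (hkn : k ≤ n)
    (α : Fin m → Fin k → ZMod 2)
    (f : {x : Fin k → EuclideanSpace ℝ (Fin n) // IsFlagFrame n k x} →
      EuclideanSpace ℝ (Fin m))
    (hf : Continuous f)
    (hequiv : ∀ (x : {x : Fin k → EuclideanSpace ℝ (Fin n) // IsFlagFrame n k x})
      (j : Fin k) (hx : IsFlagFrame n k (negAt j x.1)) (i : Fin m),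
      f ⟨negAt j x.1, hx⟩ i = (-1 : ℝ) ^ (α i j).val * f x i) :
    ∃ F : {x : Fin k → EuclideanSpace ℝ (Fin n) // IsStiefelFrame n k x} →
        EuclideanSpace ℝ (Fin m),
      Continuous F ∧
      (∀ (x : {x : Fin k → EuclideanSpace ℝ (Fin n) // IsStiefelFrame n k x})
        (j : Fin k) (hx : IsStiefelFrame n k (negAt j x.1)) (i : Fin m),
        F ⟨negAt j x.1, hx⟩ i = (-1 : ℝ) ^ (α i j).val * F x i) ∧
      ∀ (x : Fin k → EuclideanSpace ℝ (Fin n)) (hV : IsStiefelFrame n k x)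
        (hM : IsFlagFrame n k x), F ⟨x, hV⟩ = f ⟨x, hM⟩ :=
  stmt_13_general n k m α f hf hequiv
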